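/- arXiv:2004.07214 — 2 statements merged into one kernel-verified Lean document; each statement's English description precedes it below -/
import Mathlib

section
/- Let G be a finite graph and D a minimal dominating set of G such that the induced subgraph G[D] contains at least one edge. Then there exists a minimal dominating set D* of G such that the edge set of G[D*] is a proper subset of the edge set of G[D] and some vertex of D* is isolated in G[D*]. -/
open Set

/-- The closed neighborhood `N[v]` of a vertex. -/
def closedNbhd {V : Type*} (G : SimpleGraph V) (v : V) : Set V :=
  insert v (G.neighborSet v)

/-- The closed neighborhood `N[S]` of a set of vertices. -/
def closedNbhdSet {V : Type*} (G : SimpleGraph V) (S : Set V) : Set V :=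
  ⋃ v ∈ S, closedNbhd G v

/-- `D` is a dominating set of `G`. -/
def IsDomSet {V : Type*} (G : SimpleGraph V) (D : Set V) : Prop :=
  ∀ w, w ∈ closedNbhdSet G D

/-- `D` is a minimal dominating set of `G`. -/
def IsMinDomSet {V : Type*} (G : SimpleGraph V) (D : Set V) : Prop :=
  IsDomSet G D ∧ ∀ D' ⊂ D, ¬ IsDomSet G D'

/-- The set `priv(D, u)` of private neighbors of `u` with respect to `D`:
vertices `v` with `N[v] ∩ D = {u}`. -/
def privSet {V : Type*} (G : SimpleGraph V) (D : Set V) (u : V) : Set V :=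
  {v | closedNbhd G v ∩ D = {u}}

/-- `X` is a maximal independent set of the subgraph of `G` induced by `S`. -/
def IsMaxIndepOn {V : Type*} (G : SimpleGraph V) (S X : Set V) : Prop :=
  X ⊆ S ∧ (∀ x ∈ X, ∀ y ∈ X, ¬ G.Adj x y) ∧
    ∀ X' ⊆ S, (∀ x ∈ X', ∀ y ∈ X', ¬ G.Adj x y) → X ⊆ X' → X' = X

/-- The edge set of the subgraph of `G` induced by `S`. -/
def edgesIn {V : Type*} (G : SimpleGraph V) (S : Set V) : Set (Sym2 V) :=
  {e ∈ G.edgeSet | ∀ x ∈ e, x ∈ S}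

/-! Take an edge `uy` of `G[D]`. Since `D \ {u}` does not dominate, `u` has private neighbours,
and none of them is `u` itself (it sees `y`). Replace `u` by a maximal independent set `X` of
its private neighbours: `D \ {u} ∪ X` still dominates, and every vertex of `X` has no
neighbour in it, because a private neighbour of `u` sees no other vertex of `D`. Hence any
minimal dominating subset keeps all of `X` as isolated vertices, its edges are edges of
`G[D \ {u}]`, and the edge `uy` is lost. -/

section

variable {V : Type*} {G : SimpleGraph V}

lemma mem_closedNbhd_iff {v w : V} : w ∈ closedNbhd G v ↔ w = v ∨ G.Adj v w := by
  simp [closedNbhd]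

lemma mem_closedNbhd_comm {v w : V} : w ∈ closedNbhd G v ↔ v ∈ closedNbhd G w := by
  rw [mem_closedNbhd_iff, mem_closedNbhd_iff, G.adj_comm, eq_comm]

lemma mem_closedNbhdSet_iff {S : Set V} {w : V} :
    w ∈ closedNbhdSet G S ↔ ∃ d ∈ S, w ∈ closedNbhd G d := by
  simp [closedNbhdSet]

lemma isDomSet_iff {D : Set V} : IsDomSet G D ↔ ∀ w, ∃ d ∈ D, w ∈ closedNbhd G d := by
  simp only [IsDomSet, mem_closedNbhdSet_iff]

lemma mk_mem_edgesIn_iff {S : Set V} {a b : V} :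
    s(a, b) ∈ edgesIn G S ↔ G.Adj a b ∧ a ∈ S ∧ b ∈ S := by
  simp [edgesIn]

lemma edgesIn_subset_of_forall_not_adj {S T : Set V}
    (h : ∀ x ∈ S, x ∉ T → ∀ z ∈ S, ¬ G.Adj x z) : edgesIn G S ⊆ edgesIn G T := by
  rintro ⟨a, b⟩ he
  rw [mk_mem_edgesIn_iff] at he ⊢
  obtain ⟨hab, ha, hb⟩ := he
  refine ⟨hab, ?_, ?_⟩
  · by_contra haT
    exact h a ha haT b hb hab
  · by_contra hbT
    exact h b hb hbT a ha hab.symm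

lemma not_adj_of_mem_privSet {D : Set V} {u v d : V} (hv : v ∈ privSet G D u) (hd : d ∈ D)
    (hdu : d ≠ u) : ¬ G.Adj v d := fun hvd =>
  hdu <| (Set.ext_iff.mp hv d).mp ⟨mem_closedNbhd_iff.mpr (Or.inr hvd), hd⟩

lemma IsDomSet.mem_privSet {D : Set V} (hD : IsDomSet G D) {u w : V}
    (hw : ∀ d ∈ D \ {u}, w ∉ closedNbhd G d) : w ∈ privSet G D u := by
  obtain ⟨d, hd, hwd⟩ := isDomSet_iff.mp hD w
  have hdu : d = u := by
    by_contra hne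
    exact hw d ⟨hd, hne⟩ hwd
  subst hdu
  ext z
  refine ⟨fun ⟨hzw, hz⟩ => ?_, fun hz => ?_⟩
  · by_contra hne
    exact hw z ⟨hz, hne⟩ (mem_closedNbhd_comm.mp hzw)
  · rw [Set.mem_singleton_iff.mp hz]
    exact ⟨mem_closedNbhd_comm.mp hwd, hd⟩

lemma IsDomSet.sdiff_singleton_union {D X : Set V} (hD : IsDomSet G D) {u : V}
    (hX : privSet G D u ⊆ closedNbhdSet G X) : IsDomSet G (D \ {u} ∪ X) := by
  rw [isDomSet_iff]
  intro w
  by_cases hw : ∃ d ∈ D \ {u}, w ∈ closedNbhd G d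
  · obtain ⟨d, hd, hwd⟩ := hw
    exact ⟨d, Or.inl hd, hwd⟩
  · push Not at hw
    obtain ⟨x, hx, hwx⟩ := mem_closedNbhdSet_iff.mp (hX (hD.mem_privSet hw))
    exact ⟨x, Or.inr hx, hwx⟩

lemma IsMinDomSet.privSet_nonempty {D : Set V} (hD : IsMinDomSet G D) {u : V} (hu : u ∈ D) :
    (privSet G D u).Nonempty := by
  rw [Set.nonempty_iff_ne_empty]
  intro hempty
  refine hD.2 (D \ {u}) (Set.sdiff_singleton_ssubset.mpr hu) ?_
  simpa using hD.1.sdiff_singleton_union (X := ∅) (u := u) (by simp [hempty])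

lemma IsDomSet.exists_isMinDomSet_subset [Finite V] {A : Set V} (hA : IsDomSet G A) :
    ∃ B ⊆ A, IsMinDomSet G B := by
  obtain ⟨B, ⟨hBA, hB⟩, hmin⟩ := Set.Finite.exists_minimalFor id
    {B | B ⊆ A ∧ IsDomSet G B} (Set.toFinite _) ⟨A, subset_rfl, hA⟩
  exact ⟨B, hBA, hB, fun D' hD' hD'dom => hD'.2 (hmin ⟨hD'.1.trans hBA, hD'dom⟩ hD'.1)⟩

lemma IsDomSet.mem_of_forall_not_adj {B : Set V} (hB : IsDomSet G B) {x : V}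
    (hx : ∀ z ∈ B, ¬ G.Adj x z) : x ∈ B := by
  obtain ⟨b, hb, hxb⟩ := isDomSet_iff.mp hB x
  rcases mem_closedNbhd_iff.mp hxb with rfl | hbx
  · exact hb
  · exact absurd hbx.symm (hx b hb)

lemma exists_isMaxIndepOn [Finite V] (S : Set V) : ∃ X, IsMaxIndepOn G S X := by
  obtain ⟨X, ⟨hXS, hX⟩, hmax⟩ := Set.Finite.exists_maximalFor id
    {X : Set V | X ⊆ S ∧ ∀ x ∈ X, ∀ y ∈ X, ¬ G.Adj x y} (Set.toFinite _)
    ⟨∅, Set.empty_subset _, by simp⟩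
  exact ⟨X, hXS, hX, fun X' hX'S hX' hXX' => hXX'.antisymm' (hmax ⟨hX'S, hX'⟩ hXX')⟩

lemma IsMaxIndepOn.subset_closedNbhdSet {S X : Set V} (hX : IsMaxIndepOn G S X) :
    S ⊆ closedNbhdSet G X := by
  intro q hq
  rw [mem_closedNbhdSet_iff]
  by_cases hqX : q ∈ X
  · exact ⟨q, hqX, mem_closedNbhd_iff.mpr (Or.inl rfl)⟩
  by_contra! hno
  have hindep : ∀ a ∈ insert q X, ∀ b ∈ insert q X, ¬ G.Adj a b := by
    have hqx : ∀ x ∈ X, ¬ G.Adj q x := fun x hx hqx =>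
      hno x hx (mem_closedNbhd_iff.mpr (Or.inr hqx.symm))
    rintro a (rfl | ha) b (rfl | hb)
    · exact G.loopless.irrefl _
    · exact hqx b hb
    · exact fun hab => hqx a ha hab.symm
    · exact hX.2.1 a ha b hb
  have := hX.2.2 (insert q X) (Set.insert_subset hq hX.1) hindep (Set.subset_insert q X)
  exact hqX (this ▸ Set.mem_insert q X)

lemma IsMaxIndepOn.nonempty {S X : Set V} (hX : IsMaxIndepOn G S X) (hS : S.Nonempty) :
    X.Nonempty := by
  obtain ⟨q, hq⟩ := hS
  obtain ⟨x, hx, -⟩ := mem_closedNbhdSet_iff.mp (hX.subset_closedNbhdSet hq)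
  exact ⟨x, hx⟩

lemma IsMaxIndepOn.not_adj_sdiff_union {D X : Set V} {u : V}
    (hX : IsMaxIndepOn G (privSet G D u) X) {x z : V} (hx : x ∈ X) (hz : z ∈ D \ {u} ∪ X) :
    ¬ G.Adj x z := by
  rcases hz with ⟨hzD, hzu⟩ | hzX
  · exact not_adj_of_mem_privSet (hX.1 hx) hzD hzu
  · exact hX.2.1 x hx z hzX

end

/-- If `D` is a minimal dominating set of a finite graph `G` and `G[D]` contains at
least one edge, then there is a minimal dominating set `D*` of `G` whose induced edge
set is a proper subset of that of `G[D]`, with some vertex of `D*` isolated in `G[D*]`. -/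
theorem stmt6 {V : Type*} [Fintype V] (G : SimpleGraph V)
    (D : Set V) (hD : IsMinDomSet G D)
    (hedge : ∃ x ∈ D, ∃ y ∈ D, G.Adj x y) :
    ∃ Dstar : Set V, IsMinDomSet G Dstar ∧
      edgesIn G Dstar ⊂ edgesIn G D ∧
      ∃ w ∈ Dstar, ∀ x ∈ Dstar, ¬ G.Adj w x := by
  obtain ⟨u, hu, y, hy, huy⟩ := hedge
  obtain ⟨X, hX⟩ := exists_isMaxIndepOn (G := G) (privSet G D u)
  obtain ⟨w, hw⟩ := hX.nonempty (hD.privSet_nonempty hu)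
  have hA : IsDomSet G (D \ {u} ∪ X) := hD.1.sdiff_singleton_union hX.subset_closedNbhdSet
  obtain ⟨B, hBA, hB⟩ := hA.exists_isMinDomSet_subset
  have hiso : ∀ x ∈ X, ∀ z ∈ B, ¬ G.Adj x z := fun x hx z hz =>
    hX.not_adj_sdiff_union hx (hBA hz)
  have huB : u ∉ B := by
    rintro hu'
    rcases hBA hu' with ⟨-, hne⟩ | huX
    · exact hne rfl
    · exact not_adj_of_mem_privSet (hX.1 huX) hy (G.ne_of_adj huy).symm huy
  refine ⟨B, hB, ?_, w, hB.1.mem_of_forall_not_adj (hiso w hw), hiso w hw⟩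
  refine Set.ssubset_iff_subset_ne.mpr ⟨edgesIn_subset_of_forall_not_adj ?_, ?_⟩
  · intro x hxB hxD
    rcases hBA hxB with ⟨hx, -⟩ | hxX
    · exact absurd hx hxD
    · exact hiso x hxX
  · intro heq
    have huyD : s(u, y) ∈ edgesIn G D := mk_mem_edgesIn_iff.mpr ⟨huy, hu, hy⟩
    exact huB (mk_mem_edgesIn_iff.mp (heq ▸ huyD)).2.1
end

section
/- Let G be the comparability graph of a finite poset P = (V, ≤). Let D be a minimal dominating set of G, let u ∈ D have a neighbor in D, let v ∈ priv(D, u) with u ≤ v, let X be a maximal independent set of the induced subgraph G[priv(D,u) ∖ N[v]], and set D' = (D ∖ {u}) ∪ X ∪ {v}. Let Z ⊆ D ∖ {u} be such that priv(D', z) = ∅ for every z ∈ Z and such that D* = D' ∖ Z is a minimal dominating set of G. Define R_1 = {x ∈ D* : u ≤ x and x ∈ priv(D*, x)}, B = V ∖ N[(D* ∖ R_1) ∪ {u}], R_2 = ↑B ∖ N[R_1], and R = (R_1 ∖ {v}) ∪ R_2. Then the set (R_1 ∪ Z) ∖ (X ∪ {v}) is a minimal red dominating set of G(R, B), i.e.,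 it is an inclusion-minimal subset of R whose closed neighborhood contains B. -/
open Set

/-- `D` is a minimal red dominating set of `G(R, B)`: an inclusion-minimal subset of `R`
whose closed neighborhood contains `B`. -/
def IsMinRedDom {V : Type*} (G : SimpleGraph V) (R B D : Set V) : Prop :=
  D ⊆ R ∧ B ⊆ closedNbhdSet G D ∧ ∀ D' ⊂ D, ¬ B ⊆ closedNbhdSet G D'

/-- The comparability graph of a poset: distinct vertices are adjacent iff comparable. -/
def compGraph (V : Type*) [PartialOrder V] : SimpleGraph V :=
  SimpleGraph.fromRel (fun x y => x ≤ y)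

/-!
Write `T = (D* \ R₁) ∪ {u}`, so that `B = V \ N[T]`. The set `X ∪ {v}` is an independent set of
private neighbours of `u` lying above `u`, hence it is contained in `R₁`; therefore `T ⊆ D` and
`(R₁ ∪ Z) \ (X ∪ {v}) = D \ T`. For every `T ⊆ D`, the set `D \ T` red-dominates `V \ N[T]`
minimally, because the private neighbours of its vertices with respect to `D` lie in `V \ N[T]`.
It remains to see `Z ⊆ R₂`. Let `p ∈ B` be a private neighbour of `z ∈ Z`. As `z` has no private
neighbour with respect to `D'`, `p` has a neighbour `y ∈ X ∪ {v}`; from `u ≤ y` and `p ∉ N[u]` we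
get `p ≤ y`, so `z ≤ p` would make `z` comparable to the private neighbour `y` of `u`. Hence
`p ≤ z`. Finally `z` is comparable to no `r ∈ R₁`, since a minimal dominating set of a
comparability graph contains no three-element chain.
-/

section Domination

variable {V : Type*} {G : SimpleGraph V} {D E P R S T : Set V} {p s u w x y : V}

lemma self_mem_closedNbhd (x : V) : x ∈ closedNbhd G x :=
  mem_insert x _

lemma mem_closedNbhd_comm_s9 : x ∈ closedNbhd G y ↔ y ∈ closedNbhd G x := by
  simp only [closedNbhd, mem_insert_iff, SimpleGraph.mem_neighborSet, eq_comm, G.adj_comm]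

lemma mem_closedNbhdSet : w ∈ closedNbhdSet G S ↔ ∃ v ∈ S, w ∈ closedNbhd G v :=
  mem_iUnion₂.trans (by simp only [exists_prop])

lemma closedNbhdSet_mono (h : S ⊆ T) : closedNbhdSet G S ⊆ closedNbhdSet G T :=
  biUnion_subset_biUnion_left h

lemma mem_privSet :
    p ∈ privSet G D s ↔ s ∈ D ∧ s ∈ closedNbhd G p ∧ ∀ d ∈ D, d ∈ closedNbhd G p → d = s := by
  simp only [privSet, mem_ofPred_eq, eq_singleton_iff_unique_mem, mem_inter_iff]
  tauto

lemma eq_of_mem_privSet (hp : p ∈ privSet G D s) {d : V} (hd : d ∈ D)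
    (hdp : d ∈ closedNbhd G p) : d = s :=
  (mem_privSet.1 hp).2.2 d hd hdp

lemma notMem_privSet_self_of_adj (hw : w ∈ D) (huw : G.Adj u w) : u ∉ privSet G D u := fun hu =>
  G.loopless.irrefl u (eq_of_mem_privSet hu hw (Or.inr huw) ▸ huw)

lemma disjoint_of_subset_privSet (hP : P ⊆ privSet G D u) (hu : u ∉ P) : Disjoint P D :=
  disjoint_left.2 fun p hp hpD => hu (eq_of_mem_privSet (hP hp) hpD (self_mem_closedNbhd p) ▸ hp)

lemma IsMinDomSet.exists_mem_privSet (hD : IsMinDomSet G D) (hs : s ∈ D) :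
    ∃ p, p ∈ privSet G D s := by
  by_contra! h
  refine hD.2 (D \ {s}) (sdiff_subset.ssubset_of_mem_notMem hs fun h => h.2 rfl) fun w => ?_
  obtain ⟨d, hd, hwd⟩ := mem_closedNbhdSet.1 (hD.1 w)
  by_cases hds : d = s
  · subst hds
    have hw : w ∉ privSet G D d := h w
    simp only [mem_privSet, not_and, not_forall] at hw
    obtain ⟨e, he, hew, hed⟩ := hw hd (mem_closedNbhd_comm_s9.1 hwd)
    exact mem_closedNbhdSet.2 ⟨e, ⟨he, hed⟩, mem_closedNbhd_comm_s9.1 hew⟩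
  · exact mem_closedNbhdSet.2 ⟨d, ⟨hd, hds⟩, hwd⟩

lemma IsDomSet.univ_sdiff_closedNbhdSet_subset (hD : IsDomSet G D) (T : Set V) :
    univ \ closedNbhdSet G T ⊆ closedNbhdSet G (D \ T) := by
  rintro w ⟨-, hwT⟩
  obtain ⟨d, hd, hwd⟩ := mem_closedNbhdSet.1 (hD w)
  exact mem_closedNbhdSet.2 ⟨d, ⟨hd, fun hdT => hwT (mem_closedNbhdSet.2 ⟨d, hdT, hwd⟩)⟩, hwd⟩

lemma notMem_closedNbhdSet_of_mem_privSet (hp : p ∈ privSet G D s) (hT : T ⊆ D) (hs : s ∉ T) :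
    p ∉ closedNbhdSet G T := fun hpT => by
  obtain ⟨t, ht, hpt⟩ := mem_closedNbhdSet.1 hpT
  exact hs (eq_of_mem_privSet hp (hT ht) (mem_closedNbhd_comm_s9.1 hpt) ▸ ht)

lemma IsMinDomSet.isMinRedDom_sdiff (hD : IsMinDomSet G D) (hT : T ⊆ D) (hR : D \ T ⊆ R) :
    IsMinRedDom G R (univ \ closedNbhdSet G T) (D \ T) := by
  refine ⟨hR, hD.1.univ_sdiff_closedNbhdSet_subset T, fun S hS hB => ?_⟩
  obtain ⟨s, ⟨hsD, hsT⟩, hsS⟩ := exists_of_ssubset hS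
  obtain ⟨p, hp⟩ := hD.exists_mem_privSet hsD
  obtain ⟨t, ht, hpt⟩ :=
    mem_closedNbhdSet.1 (hB ⟨trivial, notMem_closedNbhdSet_of_mem_privSet hp hT hsT⟩)
  exact hsS (eq_of_mem_privSet hp (hS.1 ht).1 (mem_closedNbhd_comm_s9.1 hpt) ▸ ht)

lemma mem_privSet_self_of_isIndepSet (hP : P ⊆ privSet G D u) (hPi : G.IsIndepSet P)
    (hE : E ⊆ D \ {u} ∪ P) (hp : p ∈ P) (hpE : p ∈ E) : p ∈ privSet G E p := by
  refine mem_privSet.2 ⟨hpE, self_mem_closedNbhd p, fun d hd hdp => ?_⟩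
  rcases hE hd with ⟨hdD, hdu⟩ | hdP
  · exact absurd (eq_of_mem_privSet (hP hp) hdD hdp) hdu
  · by_contra hne
    exact hPi hp hdP (Ne.symm hne) (hdp.resolve_left hne)

end Domination

section Comparability

variable {V : Type*} [PartialOrder V] {D P R₁ : Set V} {p r s u v x y : V}

lemma mem_closedNbhd_compGraph : x ∈ closedNbhd (compGraph V) y ↔ x ≤ y ∨ y ≤ x := by
  simp only [closedNbhd, mem_insert_iff, SimpleGraph.mem_neighborSet, compGraph,
    SimpleGraph.fromRel_adj]
  by_cases h : x = y
  · simp [h]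
  · grind

lemma IsMinDomSet.eq_or_eq_of_le_of_le (hD : IsMinDomSet (compGraph V) D) (hu : u ∈ D)
    (hr : r ∈ D) (hs : s ∈ D) (hur : u ≤ r) (hrs : r ≤ s) : r = u ∨ r = s := by
  obtain ⟨q, hq⟩ := hD.exists_mem_privSet hr
  rcases mem_closedNbhd_compGraph.1 (mem_privSet.1 hq).2.1 with hrq | hqr
  · exact .inl (eq_of_mem_privSet hq hu (mem_closedNbhd_compGraph.2 (.inl (hur.trans hrq)))).symm
  · exact .inr (eq_of_mem_privSet hq hs (mem_closedNbhd_compGraph.2 (.inr (hqr.trans hrs)))).symm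

lemma le_of_mem_privSet_of_notMem_closedNbhd (hx : x ∈ privSet (compGraph V) D u)
    (hxv : x ∉ closedNbhd (compGraph V) v) (huv : u ≤ v) : u ≤ x :=
  (mem_closedNbhd_compGraph.1 (mem_privSet.1 hx).2.1).resolve_right fun hxu =>
    hxv (mem_closedNbhd_compGraph.2 (.inl (hxu.trans huv)))

lemma le_of_mem_privSet_of_privSet_eq_empty (hP : P ⊆ privSet (compGraph V) D u)
    (hPu : ∀ y ∈ P, u ≤ y) (hsu : s ≠ u) (hs : privSet (compGraph V) (D \ {u} ∪ P) s = ∅)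
    (hp : p ∈ privSet (compGraph V) D s) (hpu : p ∉ closedNbhd (compGraph V) u) : p ≤ s := by
  obtain ⟨hsD, hsp, -⟩ := mem_privSet.1 hp
  obtain ⟨y, hyP, hyp⟩ : ∃ y ∈ P, y ∈ closedNbhd (compGraph V) p := by
    by_contra! h
    refine (hs ▸ mem_privSet.2 ⟨.inl ⟨hsD, hsu⟩, hsp, fun d hd hdp => ?_⟩ : p ∈ (∅ : Set V))
    rcases hd with ⟨hdD, -⟩ | hdP
    · exact eq_of_mem_privSet hp hdD hdp
    · exact absurd hdp (h d hdP)
  have hpy : p ≤ y := (mem_closedNbhd_compGraph.1 hyp).resolve_left fun hyp =>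
    hpu (mem_closedNbhd_compGraph.2 (.inr ((hPu y hyP).trans hyp)))
  refine (mem_closedNbhd_compGraph.1 hsp).resolve_left fun hsp => hsu ?_
  exact eq_of_mem_privSet (hP hyP) hsD (mem_closedNbhd_compGraph.2 (.inl (hsp.trans hpy)))

lemma notMem_closedNbhdSet_of_le_of_mem_privSet (hD : IsMinDomSet (compGraph V) D) (hu : u ∈ D)
    (hP : P ⊆ privSet (compGraph V) D u) (hR₁ : R₁ ⊆ D \ {u} ∪ P) (hR₁u : ∀ r ∈ R₁, u ≤ r)
    (hsR₁ : s ∉ R₁) (hsu : s ≠ u) (hp : p ∈ privSet (compGraph V) D s) (hps : p ≤ s) :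
    s ∉ closedNbhdSet (compGraph V) R₁ := fun hs => by
  have hsD := (mem_privSet.1 hp).1
  obtain ⟨r, hr, hsr⟩ := mem_closedNbhdSet.1 hs
  rcases hR₁ hr with ⟨hrD, hru⟩ | hrP
  · rcases mem_closedNbhd_compGraph.1 hsr with hsr | hrs
    · exact hsR₁ (eq_of_mem_privSet hp hrD (mem_closedNbhd_compGraph.2 (.inr (hps.trans hsr))) ▸ hr)
    · rcases hD.eq_or_eq_of_le_of_le hu hrD hsD (hR₁u r hr) hrs with rfl | rfl
      · exact hru rfl
      · exact hsR₁ hr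
  · exact hsu (eq_of_mem_privSet (hP hrP) hsD hsr)

end Comparability

section Flip

variable {V : Type*} [PartialOrder V] {D P Z E R₁ R₂ R B : Set V} {u v : V}

theorem isMinRedDom_flip (hD : IsMinDomSet (compGraph V) D) (hu : u ∈ D)
    (hP : P ⊆ privSet (compGraph V) D u) (huP : u ∉ P) (hPu : ∀ y ∈ P, u ≤ y)
    (hPi : (compGraph V).IsIndepSet P) (hvP : v ∈ P) (hZ : Z ⊆ D \ {u})
    (hZpriv : ∀ z ∈ Z, privSet (compGraph V) (D \ {u} ∪ P) z = ∅)
    (hE : E = (D \ {u} ∪ P) \ Z)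
    (hR₁ : R₁ = {x ∈ E | u ≤ x ∧ x ∈ privSet (compGraph V) E x})
    (hB : B = univ \ closedNbhdSet (compGraph V) ((E \ R₁) ∪ {u}))
    (hR₂ : R₂ = {w : V | ∃ s ∈ B, s ≤ w} \ closedNbhdSet (compGraph V) R₁)
    (hR : R = (R₁ \ {v}) ∪ R₂) :
    IsMinRedDom (compGraph V) R B ((R₁ ∪ Z) \ P) := by
  have hPD : Disjoint P D := disjoint_of_subset_privSet hP huP
  have hR₁E : R₁ ⊆ E := hR₁ ▸ sep_subset _ _
  have hR₁u : ∀ r ∈ R₁, u ≤ r := hR₁ ▸ fun r hr => hr.2.1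
  have hPR₁ : P ⊆ R₁ := fun p hp => by
    have hpE : p ∈ E := hE ▸ ⟨.inr hp, fun hpZ => hPD.notMem_of_mem_left hp (hZ hpZ).1⟩
    exact hR₁ ▸ ⟨hpE, hPu p hp, mem_privSet_self_of_isIndepSet hP hPi (hE ▸ sdiff_subset) hp hpE⟩
  have hTD : E \ R₁ ∪ {u} ⊆ D := fun x hx => by
    subst hE
    simp only [mem_union, mem_sdiff, mem_singleton_iff] at hx
    grind
  have hS : (R₁ ∪ Z) \ P = D \ (E \ R₁ ∪ {u}) := by
    subst hE
    ext s
    have := @hR₁E s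
    have := @hZ s
    have := hPD.notMem_of_mem_right (a := s)
    simp only [mem_union, mem_sdiff, mem_singleton_iff] at *
    tauto
  rw [hS, hB]
  refine hD.isMinRedDom_sdiff hTD fun s ⟨hsD, hsT⟩ => ?_
  have hsu : s ≠ u := fun h => hsT (.inr h)
  rw [hR, hR₂]
  by_cases hsR₁ : s ∈ R₁
  · exact .inl ⟨hsR₁, fun h => hPD.notMem_of_mem_left hvP (h ▸ hsD)⟩
  have hsE : s ∉ E := fun h => hsT (.inl ⟨h, hsR₁⟩)
  have hsZ : s ∈ Z := by
    by_contra h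
    exact hsE (hE ▸ ⟨.inl ⟨hsD, hsu⟩, h⟩)
  obtain ⟨p, hp⟩ := hD.exists_mem_privSet hsD
  have hpB : p ∈ B := hB ▸ ⟨trivial, notMem_closedNbhdSet_of_mem_privSet hp hTD hsT⟩
  have hps : p ≤ s := le_of_mem_privSet_of_privSet_eq_empty hP hPu hsu (hZpriv s hsZ) hp
    fun h => (hB ▸ hpB).2 (mem_closedNbhdSet.2 ⟨u, .inr rfl, h⟩)
  exact .inr ⟨⟨p, hpB, hps⟩, notMem_closedNbhdSet_of_le_of_mem_privSet hD hu hP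
    (hR₁E.trans (hE ▸ sdiff_subset)) hR₁u hsR₁ hsu hp hps⟩

end Flip

theorem stmt9_general {V : Type*} [PartialOrder V]
    (D : Set V) (hD : IsMinDomSet (compGraph V) D)
    (u : V) (hu : u ∈ D) (hnb : ∃ w ∈ D, (compGraph V).Adj u w)
    (v : V) (hv : v ∈ privSet (compGraph V) D u) (huv : u ≤ v)
    (X : Set V)
    (hX : IsMaxIndepOn (compGraph V)
      (privSet (compGraph V) D u \ closedNbhd (compGraph V) v) X)
    (D' : Set V) (hD' : D' = (D \ {u}) ∪ X ∪ {v})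
    (Z : Set V) (hZ : Z ⊆ D \ {u})
    (hZpriv : ∀ z ∈ Z, privSet (compGraph V) D' z = ∅)
    (Dstar : Set V) (hDstar : Dstar = D' \ Z)
    (R1 B R2 R : Set V)
    (hR1 : R1 = {x ∈ Dstar | u ≤ x ∧ x ∈ privSet (compGraph V) Dstar x})
    (hB : B = univ \ closedNbhdSet (compGraph V) ((Dstar \ R1) ∪ {u}))
    (hR2 : R2 = {w : V | ∃ s ∈ B, s ≤ w} \ closedNbhdSet (compGraph V) R1)
    (hR : R = (R1 \ {v}) ∪ R2) :
    IsMinRedDom (compGraph V) R B ((R1 ∪ Z) \ (X ∪ {v})) := by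
  obtain ⟨w, hw, huw⟩ := hnb
  have hXv : ∀ x ∈ X, x ∉ closedNbhd (compGraph V) v := fun x hx => (hX.1 hx).2
  have hvu : v ≠ u := fun h => notMem_privSet_self_of_adj hw huw (h ▸ hv)
  have huX : u ∉ X := fun h => hXv u h (mem_privSet.1 hv).2.1
  have hPu : ∀ y ∈ insert v X, u ≤ y := forall_mem_insert.2
    ⟨huv, fun x hx => le_of_mem_privSet_of_notMem_closedNbhd (hX.1 hx).1 (hXv x hx) huv⟩
  have hPi : (compGraph V).IsIndepSet (insert v X) :=
    Set.Pairwise.insert (fun x hx y hy _ => hX.2.1 x hx y hy) fun x hx _ =>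
      ⟨fun h => hXv x hx (.inr h), fun h => hXv x hx (.inr h.symm)⟩
  rw [hD', union_singleton, ← union_insert] at hZpriv hDstar
  rw [union_singleton]
  exact isMinRedDom_flip hD hu (insert_subset hv fun x hx => (hX.1 hx).1)
    (by simp [hvu.symm, huX]) hPu hPi (mem_insert v X) hZ hZpriv hDstar hR1 hB hR2 hR

/-- In the comparability graph of a finite poset, with the flipping setup
(`D` minimal dominating, `u ∈ D` with a neighbor in `D`, `v ∈ priv(D,u)`, `u ≤ v`,
`X` a maximal independent set of `G[priv(D,u) ∖ N[v]]`, `D' = (D ∖ {u}) ∪ X ∪ {v}`,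
`Z ⊆ D ∖ {u}` consisting of vertices with no private neighbor w.r.t. `D'`, and
`D* = D' ∖ Z` a minimal dominating set), defining
`R₁ = {x ∈ D* : u ≤ x, x ∈ priv(D*,x)}`, `B = V ∖ N[(D* ∖ R₁) ∪ {u}]`,
`R₂ = ↑B ∖ N[R₁]` and `R = (R₁ ∖ {v}) ∪ R₂`, the set `(R₁ ∪ Z) ∖ (X ∪ {v})` is a
minimal red dominating set of `G(R, B)`. -/
theorem stmt9 {V : Type*} [Fintype V] [PartialOrder V]
    (D : Set V) (hD : IsMinDomSet (compGraph V) D)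
    (u : V) (hu : u ∈ D) (hnb : ∃ w ∈ D, (compGraph V).Adj u w)
    (v : V) (hv : v ∈ privSet (compGraph V) D u) (huv : u ≤ v)
    (X : Set V)
    (hX : IsMaxIndepOn (compGraph V)
      (privSet (compGraph V) D u \ closedNbhd (compGraph V) v) X)
    (D' : Set V) (hD' : D' = (D \ {u}) ∪ X ∪ {v})
    (Z : Set V) (hZ : Z ⊆ D \ {u})
    (hZpriv : ∀ z ∈ Z, privSet (compGraph V) D' z = ∅)
    (Dstar : Set V) (hDstar : Dstar = D' \ Z)
    (hmin : IsMinDomSet (compGraph V) Dstar)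
    (R1 B R2 R : Set V)
    (hR1 : R1 = {x ∈ Dstar | u ≤ x ∧ x ∈ privSet (compGraph V) Dstar x})
    (hB : B = univ \ closedNbhdSet (compGraph V) ((Dstar \ R1) ∪ {u}))
    (hR2 : R2 = {w : V | ∃ s ∈ B, s ≤ w} \ closedNbhdSet (compGraph V) R1)
    (hR : R = (R1 \ {v}) ∪ R2) :
    IsMinRedDom (compGraph V) R B ((R1 ∪ Z) \ (X ∪ {v})) :=
  stmt9_general D hD u hu hnb v hv huv X hX D' hD' Z hZ hZpriv Dstar hDstar R1 B R2 R hR1 hB hR2 hR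
end
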